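/- arXiv:2509.24013 — 4 statements merged into one kernel-verified Lean document; each statement's English description precedes it below -/
import Mathlib

section
/- Let G and H be vertex-disjoint finite simple graphs with α(H) ≤ α(G). Then for each a ∈ {1, …, α(G)}, the w-function of the join satisfies: w(a, H ∨ G) = w(a,H) + w(a,G) if a ≤ α(H), and w(a, H ∨ G) = |V(H)| + w(a,G) if α(H) ≤ a ≤ α(G). -/
open Classical Finset

variable {V : Type*}

/-- Independence number of the subgraph of `G` induced on `D`. -/
noncomputable def indepNumOn (G : SimpleGraph V) [Fintype V] (D : Finset V) : ℕ :=
  (D.powerset.filter (fun s => ∀ x ∈ s, ∀ y ∈ s, x ≠ y → ¬ G.Adj x y)).sup Finset.card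

noncomputable def indepNum (G : SimpleGraph V) [Fintype V] : ℕ := indepNumOn G Finset.univ

noncomputable def cliqueNum (G : SimpleGraph V) [Fintype V] : ℕ :=
  (Finset.univ.powerset.filter
    (fun s : Finset V => ∀ x ∈ s, ∀ y ∈ s, x ≠ y → G.Adj x y)).sup Finset.card

/-- Hall ratio of `G`: max over nonempty (induced) subgraphs of |V(H)|/α(H). -/
noncomputable def hallRatio (G : SimpleGraph V) [Fintype V] : ℚ :=
  if h : (Finset.univ.powerset.filter (fun s : Finset V => s.Nonempty)).Nonempty then
    (Finset.univ.powerset.filter (fun s : Finset V => s.Nonempty)).sup' h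
      (fun D => (D.card : ℚ) / (indepNumOn G D : ℚ))
  else 0

/-- `wfun G a` : order of the largest induced subgraph of `G` with independence number `a`. -/
noncomputable def wfun (G : SimpleGraph V) [Fintype V] (a : ℕ) : ℕ :=
  (Finset.univ.powerset.filter (fun s : Finset V => indepNumOn G s = a)).sup Finset.card

/-- Join of two vertex-disjoint graphs. -/
def joinG {α β : Type*} (G : SimpleGraph α) (H : SimpleGraph β) : SimpleGraph (α ⊕ β) where
  Adj x y :=
    match x, y with
    | Sum.inl a, Sum.inl b => G.Adj a b
    | Sum.inr a, Sum.inr b => H.Adj a b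
    | Sum.inl _, Sum.inr _ => True
    | Sum.inr _, Sum.inl _ => True
  symm := by
    constructor
    rintro (a | a) (b | b) h <;> try trivial
    · exact h.symm
    · exact h.symm
  loopless := by
    constructor
    rintro (a | a) h
    · exact G.irrefl h
    · exact H.irrefl h

/-- `G` is `f`-choosable. -/
def Choosable (G : SimpleGraph V) (f : V → ℕ) : Prop :=
  ∀ L : V → Finset ℕ, (∀ v, (L v).card = f v) →
    ∃ c : V → ℕ, (∀ v, c v ∈ L v) ∧ ∀ u v, G.Adj u v → c u ≠ c v

/-- List chromatic number. -/
noncomputable def listChromNum (G : SimpleGraph V) : ℕ :=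
  sInf {k | Choosable G (fun _ => k)}

/-- Chromatic number (as a natural number). -/
noncomputable def chromNum (G : SimpleGraph V) : ℕ :=
  sInf {n | G.Colorable n}

/-- `G` is `(k, ε)`-flexible: for every `k`-assignment `L` and every request `r`
with nonempty domain `D`, some proper `L`-coloring satisfies at least `ε|D|` requests. -/
def FlexSat (G : SimpleGraph V) (k : ℕ) (ε : ℚ) : Prop :=
  ∀ L : V → Finset ℕ, (∀ v, (L v).card = k) →
    ∀ D : Finset V, D.Nonempty → ∀ r : V → ℕ, (∀ v ∈ D, r v ∈ L v) →
      ∃ c : V → ℕ, (∀ v, c v ∈ L v) ∧ (∀ u v, G.Adj u v → c u ≠ c v) ∧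
        ε * (D.card : ℚ) ≤ ((D.filter (fun v => c v = r v)).card : ℚ)

/-- List flexibility number. -/
noncomputable def listFlexNum (G : SimpleGraph V) [Fintype V] : ℕ :=
  sInf {k | FlexSat G k (1 / hallRatio G)}

/-!
Write `wfunLE G a` for the largest order of an induced subgraph of `G` with independence number
*at most* `a`. Adding one vertex raises the independence number of an induced subgraph by at most
one, so every such subgraph extends to one with independence number exactly `a` as long as
`a ≤ α(G)`; hence `w(a, G) = wfunLE G a` in that range. An independent set of `H ∨ G` lies
entirely in `H` or entirely in `G`, so `α(A ∪ B) = max (α(A), α(B))` for `A ⊆ V(H)`, `B ⊆ V(G)`,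
and `wfunLE` is additive over joins. Finally `wfunLE H a` is `w(a, H)` for `a ≤ α(H)` and
`|V(H)|` for `a ≥ α(H)`.
-/

section IndepNumOn

variable [Fintype V] (G : SimpleGraph V)

lemma card_le_indepNumOn {s D : Finset V} (hsD : s ⊆ D) (hs : G.IsIndepSet s) :
    #s ≤ indepNumOn G D :=
  le_sup (mem_filter.2 ⟨mem_powerset.2 hsD, fun _ hx _ hy hxy => hs hx hy hxy⟩)

lemma exists_isIndepSet_card_eq_indepNumOn (D : Finset V) :
    ∃ s ⊆ D, G.IsIndepSet s ∧ #s = indepNumOn G D := by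
  obtain ⟨s, hs, hcard⟩ := exists_mem_eq_sup
    (D.powerset.filter (fun s => ∀ x ∈ s, ∀ y ∈ s, x ≠ y → ¬ G.Adj x y)) ⟨∅, by simp⟩ card
  rw [mem_filter, mem_powerset] at hs
  exact ⟨s, hs.1, fun _ hx _ hy hxy => hs.2 _ hx _ hy hxy, hcard.symm⟩

lemma indepNumOn_le_card (D : Finset V) : indepNumOn G D ≤ #D :=
  Finset.sup_le fun _ hs => card_le_card (mem_powerset.1 (mem_filter.1 hs).1)

lemma indepNumOn_insert_le (v : V) (D : Finset V) :
    indepNumOn G (insert v D) ≤ indepNumOn G D + 1 := by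
  obtain ⟨s, hsD, hs, hcard⟩ := exists_isIndepSet_card_eq_indepNumOn G (insert v D)
  have herase : #(s.erase v) ≤ indepNumOn G D :=
    card_le_indepNumOn G (subset_insert_iff.1 hsD) (hs.mono (by simp))
  have := pred_card_le_card_erase (s := s) (a := v)
  omega

lemma exists_superset_indepNumOn_eq {S : Finset V} {a : ℕ} (hS : indepNumOn G S ≤ a)
    (ha : a ≤ indepNum G) : ∃ T, S ⊆ T ∧ indepNumOn G T = a := by
  suffices ∀ D : Finset V, a ≤ indepNumOn G (S ∪ D) → ∃ T, S ⊆ T ∧ indepNumOn G T = a from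
    this univ (by rwa [union_eq_right.2 (subset_univ S)])
  intro D
  induction D using Finset.induction_on with
  | empty => exact fun h => ⟨S, subset_rfl, le_antisymm hS (by simpa using h)⟩
  | insert v D _ ih =>
    intro h
    by_cases hD : a ≤ indepNumOn G (S ∪ D)
    · exact ih hD
    · refine ⟨S ∪ insert v D, subset_union_left, le_antisymm ?_ h⟩
      have := indepNumOn_insert_le G v (S ∪ D)
      rw [union_insert]
      omega

end IndepNumOn

section WfunLE

variable [Fintype V] (G : SimpleGraph V)

noncomputable def wfunLE (a : ℕ) : ℕ :=
  (univ.filter (fun S : Finset V => indepNumOn G S ≤ a)).sup card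

lemma card_le_wfunLE {S : Finset V} {a : ℕ} (hS : indepNumOn G S ≤ a) : #S ≤ wfunLE G a :=
  le_sup (f := card) (mem_filter.2 ⟨mem_univ S, hS⟩)

lemma exists_card_eq_wfunLE (a : ℕ) : ∃ S, indepNumOn G S ≤ a ∧ #S = wfunLE G a := by
  obtain ⟨S, hS, hcard⟩ := exists_mem_eq_sup (univ.filter (fun S : Finset V => indepNumOn G S ≤ a))
    ⟨∅, by simpa using (indepNumOn_le_card G ∅).trans (Nat.zero_le a)⟩ card
  exact ⟨S, (mem_filter.1 hS).2, hcard.symm⟩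

lemma wfun_eq_wfunLE {a : ℕ} (ha : a ≤ indepNum G) : wfun G a = wfunLE G a := by
  refine le_antisymm (sup_mono fun S hS => ?_) (Finset.sup_le fun S hS => ?_)
  · simpa using (mem_filter.1 hS).2.le
  · obtain ⟨T, hST, hT⟩ := exists_superset_indepNumOn_eq G (mem_filter.1 hS).2 ha
    exact (card_le_card hST).trans (le_sup (by simpa using hT))

lemma wfunLE_of_indepNum_le {a : ℕ} (ha : indepNum G ≤ a) : wfunLE G a = Fintype.card V :=
  le_antisymm (Finset.sup_le fun S _ => card_le_univ S) (card_le_wfunLE G ha)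

end WfunLE

section Join

variable {α β : Type*} (G : SimpleGraph α) (H : SimpleGraph β)

lemma isIndepSet_joinG_disjSum_iff {A : Finset β} {B : Finset α} :
    (joinG H G).IsIndepSet (A.disjSum B) ↔
      H.IsIndepSet A ∧ B = ∅ ∨ A = ∅ ∧ G.IsIndepSet B := by
  constructor
  · intro h
    by_cases hB : B = ∅
    · refine .inl ⟨fun x hx y hy hxy => ?_, hB⟩
      exact h (inl_mem_disjSum.2 hx) (inl_mem_disjSum.2 hy) (Sum.inl_injective.ne hxy)
    · obtain ⟨c, hc⟩ := nonempty_iff_ne_empty.2 hB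
      refine .inr ⟨eq_empty_of_forall_notMem fun b hb => ?_, fun x hx y hy hxy => ?_⟩
      · exact h (inl_mem_disjSum.2 hb) (inr_mem_disjSum.2 hc) Sum.inl_ne_inr trivial
      · exact h (inr_mem_disjSum.2 hx) (inr_mem_disjSum.2 hy) (Sum.inr_injective.ne hxy)
  · rintro (⟨hA, rfl⟩ | ⟨rfl, hB⟩) (x | x) hx (y | y) hy hxy <;> simp at hx hy
    · exact hA hx hy (by simpa using hxy)
    · exact hB hx hy (by simpa using hxy)

variable [Fintype α] [Fintype β]

lemma indepNumOn_joinG_disjSum (A : Finset β) (B : Finset α) :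
    indepNumOn (joinG H G) (A.disjSum B) = max (indepNumOn H A) (indepNumOn G B) := by
  refine le_antisymm ?_ (max_le ?_ ?_)
  · obtain ⟨s, hsub, hs, hcard⟩ := exists_isIndepSet_card_eq_indepNumOn (joinG H G) (A.disjSum B)
    rw [subset_disjSum] at hsub
    rw [← toLeft_disjSum_toRight (u := s), isIndepSet_joinG_disjSum_iff] at hs
    rw [← hcard, ← card_toLeft_add_card_toRight]
    rcases hs with ⟨hL, hR⟩ | ⟨hL, hR⟩
    · rw [hR, card_empty, add_zero]
      exact (card_le_indepNumOn H hsub.1 hL).trans (le_max_left _ _)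
    · rw [hL, card_empty, zero_add]
      exact (card_le_indepNumOn G hsub.2 hR).trans (le_max_right _ _)
  · obtain ⟨s, hsA, hs, hcard⟩ := exists_isIndepSet_card_eq_indepNumOn H A
    calc indepNumOn H A = #(s.disjSum (∅ : Finset α)) := by simp [hcard]
      _ ≤ _ := card_le_indepNumOn _ (disjSum_mono hsA (empty_subset B))
        ((isIndepSet_joinG_disjSum_iff G H).2 (.inl ⟨hs, rfl⟩))
  · obtain ⟨s, hsB, hs, hcard⟩ := exists_isIndepSet_card_eq_indepNumOn G B
    calc indepNumOn G B = #((∅ : Finset β).disjSum s) := by simp [hcard]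
      _ ≤ _ := card_le_indepNumOn _ (disjSum_mono (empty_subset A) hsB)
        ((isIndepSet_joinG_disjSum_iff G H).2 (.inr ⟨rfl, hs⟩))

lemma indepNum_joinG : indepNum (joinG H G) = max (indepNum H) (indepNum G) :=
  indepNumOn_joinG_disjSum G H univ univ

lemma wfunLE_joinG (a : ℕ) : wfunLE (joinG H G) a = wfunLE H a + wfunLE G a := by
  refine le_antisymm (Finset.sup_le fun S hS => ?_) ?_
  · have hS := (mem_filter.1 hS).2
    rw [← toLeft_disjSum_toRight (u := S), indepNumOn_joinG_disjSum, max_le_iff] at hS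
    rw [← card_toLeft_add_card_toRight]
    exact add_le_add (card_le_wfunLE H hS.1) (card_le_wfunLE G hS.2)
  · obtain ⟨A, hA, hAcard⟩ := exists_card_eq_wfunLE H a
    obtain ⟨B, hB, hBcard⟩ := exists_card_eq_wfunLE G a
    rw [← hAcard, ← hBcard, ← card_disjSum]
    exact card_le_wfunLE _ (by rw [indepNumOn_joinG_disjSum]; exact max_le hA hB)

end Join

theorem stmt_5_general {α β : Type*} [Fintype α] [Fintype β]
    (G : SimpleGraph α) (H : SimpleGraph β)
    (a : ℕ) (ha : a ∈ Finset.Icc 1 (indepNum G)) :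
    (a ≤ indepNum H → wfun (joinG H G) a = wfun H a + wfun G a) ∧
    (indepNum H ≤ a → wfun (joinG H G) a = Fintype.card β + wfun G a) := by
  have haG : a ≤ indepNum G := (mem_Icc.1 ha).2
  have hjoin : wfun (joinG H G) a = wfunLE H a + wfun G a := by
    rw [wfun_eq_wfunLE _ (haG.trans (by rw [indepNum_joinG]; exact le_max_right _ _)),
      wfunLE_joinG, wfun_eq_wfunLE G haG]
  refine ⟨fun haH => ?_, fun haH => ?_⟩
  · rw [hjoin, wfun_eq_wfunLE H haH]
  · rw [hjoin, wfunLE_of_indepNum_le H haH]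

/-- the w-function of the join H ∨ G. -/
theorem stmt_5 {α β : Type*} [Fintype α] [Fintype β]
    (G : SimpleGraph α) (H : SimpleGraph β)
    (hind : indepNum H ≤ indepNum G)
    (a : ℕ) (ha : a ∈ Finset.Icc 1 (indepNum G)) :
    (a ≤ indepNum H → wfun (joinG H G) a = wfun H a + wfun G a) ∧
    (indepNum H ≤ a → wfun (joinG H G) a = Fintype.card β + wfun G a) :=
  stmt_5_general G H a ha
end

section
/- Let k ≥ 2 and let D be a positive integer with D ≤ 3k. Then ⌈(k/(3k+1))·D⌉ = ⌈D/3⌉. -/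
open Classical Finset

variable {V : Type*}

theorem Int.ceil_intCast_div_sub_eq {α : Type*} [Field α] [LinearOrder α] [IsStrictOrderedRing α]
    [FloorRing α] (m : ℤ) {b : ℕ} (hb : 0 < b) {ε : α} (hε₀ : 0 ≤ ε) (hε : ε < 1 / b) :
    ⌈(m : α) / b - ε⌉ = ⌈(m : α) / b⌉ := by
  have hb' : (0 : α) < b := by exact_mod_cast hb
  set c := ⌈(m : α) / b⌉
  have hc_lt : ((c - 1) * b : ℤ) < m := by
    have : ((c : α) - 1) * b < m := by
      rw [← lt_div_iff₀ hb']
      linarith [Int.ceil_lt_add_one ((m : α) / b)]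
    exact_mod_cast this
  -- integrality: `⌈m / b⌉` exceeds `m / b` by at most `(b - 1) / b`
  have hc_le : ((c : α) - 1) * b ≤ m - 1 := by exact_mod_cast Int.le_sub_one_of_lt hc_lt
  rw [Int.ceil_eq_iff]
  constructor
  · have : (c : α) - 1 ≤ (m : α) / b - 1 / b := by
      rw [← sub_div, le_div_iff₀ hb']
      exact hc_le
    linarith
  · linarith [Int.le_ceil ((m : α) / b)]

theorem stmt_11_general (k D : ℕ) (hD3k : D ≤ 3 * k) :
    ⌈((k : ℚ) / (3 * (k : ℚ) + 1)) * (D : ℚ)⌉ = ⌈(D : ℚ) / 3⌉ := by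
  have hpos : (0 : ℚ) < 3 * k + 1 := by positivity
  have hsplit : (k : ℚ) / (3 * k + 1) * D = D / 3 - D / (3 * (3 * k + 1)) := by
    field_simp
    ring
  have hsmall : (D : ℚ) / (3 * (3 * k + 1)) < 1 / (3 : ℕ) := by
    rw [div_lt_div_iff₀ (by positivity) (by norm_num)]
    have : (D : ℚ) ≤ 3 * k := by exact_mod_cast hD3k
    push_cast
    linarith
  have hceil := Int.ceil_intCast_div_sub_eq (D : ℤ) (b := 3) (by norm_num) (by positivity) hsmall
  push_cast at hceil
  rw [hsplit, hceil]

/-- for k ≥ 2 and 0 < D ≤ 3k, ⌈(k/(3k+1))·D⌉ = ⌈D/3⌉. -/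
theorem stmt_11 (k D : ℕ) (hk : 2 ≤ k) (hD : 1 ≤ D) (hD3k : D ≤ 3 * k) :
    ⌈((k : ℚ) / (3 * (k : ℚ) + 1)) * (D : ℚ)⌉ = ⌈(D : ℚ) / 3⌉ :=
  stmt_11_general k D hD3k
end

section
/- Let G be a finite simple graph and suppose there exists S ⊆ V(G) with |S| = ω(G) + 1 such that no proper χ(G)-coloring of G assigns the same color to two distinct vertices of S. Let k = χ(G), let p be large enough that ρ(K_p ∨ G) = ω(G) + p, and let H = K_p ∨ G. Then there is a (p+k)-list-assignment L for H (namely L(v) = [p+k] for all v) and a request r asking color 1 at every vertex of W ∪ S (where W is the vertex set of the copy of K_p) such that no proper L-coloring of H colors at least ⌈|W ∪ S|/ρ(H)⌉ = 2 of the vertices in W ∪ S with color 1. Consequently χ_{ℓflex}(H) > χ(H) = p + k. -/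
open Classical Finset

variable {V : Type*}

/-!
In a proper coloring of `K_p ∨ G` from the `p + k` colors `{1, …, p + k}`, the clique `K_p`
uses `p` distinct colors that appear nowhere on `G`, so `G` is properly colored from the
remaining `k` colors. By the hypothesis on `S` such a coloring is injective on `S`; it is also
injective on `W = V(K_p)` and separates `W` from `V(G)`. Hence at most one vertex of `W ∪ S`
receives color `1`, whereas `|W ∪ S| / ρ = (ω + p + 1) / (ω + p) > 1`.
-/

theorem exists_relabel_lt {k : ℕ} (A : Finset ℕ) (hA : A.card = k) (c : V → ℕ)
    (hc : ∀ v, c v ∈ A) :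
    ∃ c' : V → ℕ, (∀ v, c' v < k) ∧ ∀ u v, c' u = c' v ↔ c u = c v := by
  subst hA
  refine ⟨fun v => A.equivFin ⟨c v, hc v⟩, fun v => (A.equivFin _).isLt, fun u v => ?_⟩
  rw [Fin.val_inj, A.equivFin.apply_eq_iff_eq, Subtype.mk.injEq]

theorem Finset.image_inl_union_image_inr {α β : Type*} [DecidableEq (α ⊕ β)] (s : Finset α)
    (t : Finset β) :
    s.image Sum.inl ∪ t.image Sum.inr = s.disjSum t := by
  ext (a | b) <;> simp

namespace joinG

variable {α : Type*}

theorem top_adj_inl {G : SimpleGraph V} (i : α) (y : α ⊕ V) :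
    (joinG (⊤ : SimpleGraph α) G).Adj (Sum.inl i) y ↔ Sum.inl i ≠ y := by
  cases y <;> simp [joinG]

theorem top_adj_inr_inl {G : SimpleGraph V} (v : V) (i : α) :
    (joinG (⊤ : SimpleGraph α) G).Adj (Sum.inr v) (Sum.inl i) :=
  ((top_adj_inl i _).2 Sum.inl_ne_inr).symm

theorem exists_coloring_lt_of_top [Fintype α] {G : SimpleGraph V} {k : ℕ} (T : Finset ℕ)
    (hT : T.card = Fintype.card α + k) (c : α ⊕ V → ℕ) (hcT : ∀ x, c x ∈ T)
    (hc : ∀ x y, (joinG (⊤ : SimpleGraph α) G).Adj x y → c x ≠ c y) :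
    ∃ c' : V → ℕ, (∀ v, c' v < k) ∧ (∀ u v, G.Adj u v → c' u ≠ c' v) ∧
      ∀ u v, c' u = c' v ↔ c (Sum.inr u) = c (Sum.inr v) := by
  set W := univ.image (c ∘ Sum.inl)
  have hW_card : W.card = Fintype.card α :=
    card_image_of_injective _ fun i j hij => by
      by_contra hne
      exact hc _ _ ((top_adj_inl i _).2 (Sum.inl_injective.ne hne)) hij
  have hW_sub : W ⊆ T := fun a ha => by
    obtain ⟨i, -, rfl⟩ := mem_image.1 ha
    exact hcT _
  have hmem : ∀ v, c (Sum.inr v) ∈ T \ W := fun v => by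
    refine mem_sdiff.2 ⟨hcT _, fun hv => ?_⟩
    obtain ⟨i, -, hi⟩ := mem_image.1 hv
    exact hc _ _ (top_adj_inr_inl v i) hi.symm
  obtain ⟨c', hc'_lt, hc'_eq⟩ :=
    exists_relabel_lt (k := k) (T \ W)
      (by rw [card_sdiff_of_subset hW_sub, hT, hW_card]; omega) _ hmem
  exact ⟨c', hc'_lt, fun u v huv h => hc (Sum.inr u) (Sum.inr v) huv ((hc'_eq u v).1 h), hc'_eq⟩

theorem injOn_disjSum_of_top [Fintype α] {G : SimpleGraph V} {k : ℕ} {S : Finset V}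
    (hS : ∀ c : V → ℕ, (∀ v, c v < k) → (∀ u v, G.Adj u v → c u ≠ c v) →
      ∀ u ∈ S, ∀ v ∈ S, u ≠ v → c u ≠ c v)
    (T : Finset ℕ) (hT : T.card = Fintype.card α + k) (c : α ⊕ V → ℕ) (hcT : ∀ x, c x ∈ T)
    (hc : ∀ x y, (joinG (⊤ : SimpleGraph α) G).Adj x y → c x ≠ c y) :
    Set.InjOn c (univ.disjSum S : Finset (α ⊕ V)) := by
  obtain ⟨c', hc'_lt, hc'_proper, hc'_eq⟩ := exists_coloring_lt_of_top T hT c hcT hc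
  rintro (i | u) hx y hy hxy
  · by_contra hne
    exact hc _ _ ((top_adj_inl i y).2 hne) hxy
  · obtain j | v := y
    · exact absurd hxy (hc _ _ (top_adj_inr_inl u j))
    · by_contra hne
      exact hS c' hc'_lt hc'_proper u (inr_mem_disjSum.1 hx) v (inr_mem_disjSum.1 hy)
        (fun h => hne (congrArg Sum.inr h)) ((hc'_eq u v).2 hxy)

end joinG

theorem not_flexSat_of_card_filter_le_one {H : SimpleGraph V} {k : ℕ} {ε : ℚ}
    (L : V → Finset ℕ) (hL : ∀ v, (L v).card = k) (D : Finset V) (hD : D.Nonempty)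
    (r : V → ℕ) (hr : ∀ v ∈ D, r v ∈ L v) (hε : 1 < ε * D.card)
    (hcard : ∀ c : V → ℕ, (∀ v, c v ∈ L v) → (∀ u v, H.Adj u v → c u ≠ c v) →
      (D.filter fun v => c v = r v).card ≤ 1) :
    ¬ FlexSat H k ε := fun hflex => by
  obtain ⟨c, hcL, hc, hsat⟩ := hflex L hL D hD r hr
  have hle : ((D.filter fun v => c v = r v).card : ℚ) ≤ 1 := by exact_mod_cast hcard c hcL hc
  linarith

theorem stmt_14_general {V : Type*} [Fintype V] (G : SimpleGraph V) (k p : ℕ)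
    (hp : 1 ≤ p)
    (S : Finset V) (hScard : S.card = cliqueNum G + 1)
    (hS : ∀ c : V → ℕ, (∀ v, c v < k) → (∀ u v, G.Adj u v → c u ≠ c v) →
      ∀ u ∈ S, ∀ v ∈ S, u ≠ v → c u ≠ c v)
    (hρ : hallRatio (joinG (⊤ : SimpleGraph (Fin p)) G)
      = (cliqueNum G : ℚ) + (p : ℚ)) :
    (¬ ∃ c : Fin p ⊕ V → ℕ,
        (∀ x, c x ∈ Finset.Icc 1 (p + k)) ∧
        (∀ x y, (joinG (⊤ : SimpleGraph (Fin p)) G).Adj x y → c x ≠ c y) ∧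
        2 ≤ ((((Finset.univ : Finset (Fin p)).image Sum.inl ∪ S.image Sum.inr).filter
              (fun x => c x = 1)).card)) ∧
    ¬ FlexSat (joinG (⊤ : SimpleGraph (Fin p)) G) (p + k)
        (1 / hallRatio (joinG (⊤ : SimpleGraph (Fin p)) G)) := by
  set D : Finset (Fin p ⊕ V) := univ.image Sum.inl ∪ S.image Sum.inr
  have hD : D = univ.disjSum S := image_inl_union_image_inr univ S
  have hle : ∀ c : Fin p ⊕ V → ℕ, (∀ x, c x ∈ Icc 1 (p + k)) →
      (∀ x y, (joinG (⊤ : SimpleGraph (Fin p)) G).Adj x y → c x ≠ c y) →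
      (D.filter fun x => c x = 1).card ≤ 1 := fun c hcT hc => by
    have hinj := joinG.injOn_disjSum_of_top hS (Icc 1 (p + k)) (by simp) c hcT hc
    refine card_le_one.2 fun x hx y hy => ?_
    rw [mem_filter, hD] at hx hy
    exact hinj hx.1 hy.1 (hx.2.trans hy.2.symm)
  refine ⟨fun ⟨c, hcT, hc, h2⟩ => by have := hle c hcT hc; omega, ?_⟩
  refine not_flexSat_of_card_filter_le_one (fun _ => Icc 1 (p + k)) (by simp) D
    ⟨Sum.inl ⟨0, hp⟩, by simp [D]⟩ (fun _ => 1)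
    (fun _ _ => mem_Icc.2 ⟨le_rfl, by omega⟩) ?_ hle
  have hρ_pos : (0 : ℚ) < cliqueNum G + p := by positivity
  rw [hρ, hD, card_disjSum, card_univ, Fintype.card_fin, hScard, one_div, inv_mul_eq_div,
    one_lt_div hρ_pos]
  push_cast
  linarith

/-- if no proper χ(G)-coloring repeats a color on S (|S| = ω(G)+1), then
for the constant (p+k)-assignment L ≡ [p+k] and the constant request of color 1 on W ∪ S,
no proper L-coloring satisfies 2 of the requests; consequently K_p ∨ G is not
(p+k, 1/ρ)-flexible, i.e. χ_{ℓflex}(K_p ∨ G) > p + k = χ(K_p ∨ G). -/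
theorem stmt_14 {V : Type*} [Fintype V] (G : SimpleGraph V) (k p : ℕ)
    (hk : chromNum G = k) (hp : 1 ≤ p)
    (S : Finset V) (hScard : S.card = cliqueNum G + 1)
    (hS : ∀ c : V → ℕ, (∀ v, c v < k) → (∀ u v, G.Adj u v → c u ≠ c v) →
      ∀ u ∈ S, ∀ v ∈ S, u ≠ v → c u ≠ c v)
    (hρ : hallRatio (joinG (⊤ : SimpleGraph (Fin p)) G)
      = (cliqueNum G : ℚ) + (p : ℚ)) :
    (¬ ∃ c : Fin p ⊕ V → ℕ,
        (∀ x, c x ∈ Finset.Icc 1 (p + k)) ∧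
        (∀ x y, (joinG (⊤ : SimpleGraph (Fin p)) G).Adj x y → c x ≠ c y) ∧
        2 ≤ ((((Finset.univ : Finset (Fin p)).image Sum.inl ∪ S.image Sum.inr).filter
              (fun x => c x = 1)).card)) ∧
    ¬ FlexSat (joinG (⊤ : SimpleGraph (Fin p)) G) (p + k)
        (1 / hallRatio (joinG (⊤ : SimpleGraph (Fin p)) G)) :=
  stmt_14_general G k p hp S hScard hS hρ
end

section
/- Let a, b, k be positive integers with k ≥ b/a, and let G be a finite simple graph such that for every k-list-assignment L of G and every request r of L with domain D, some proper L-coloring of G satisfies at least (a/b)|D| of the requests. Then in the cone G' = K_1 ∨ G, for every (k+1)-list-assignment L' of G' and every request r' of L' with domain D', some proper L'-coloring of G' satisfies at least (a/(a+b))|D'| of the requests. In other words, ε_ℓ(G,k) ≥ a/b implies ε_ℓ(K_1 ∨ G, k+1) ≥ a/(a+b). -/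
open Classical Finset

variable {V : Type*}

/-!
Colour the apex with some `α` from its list, delete `α` from every other list (leaving at least
`k` colours) and apply the flexibility of `G` to the requests in `G` that differ from `α`. Over
the `k + 1` choices of `α` these requests add up to at least `k` times the requests in `G`, so
averaging gives an `α` that works whenever `b · [apex requested] ≤ a · #(requests in G)`; in the
remaining case honouring the request at the apex alone is already enough.
-/

lemma Finset.card_filter_toLeft_add_card_filter_toRight {α β : Type*} (D : Finset (α ⊕ β))
    (p : α ⊕ β → Prop) [DecidablePred p] :
    #(D.toLeft.filter fun a => p (.inl a)) + #(D.toRight.filter fun b => p (.inr b)) =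
      #(D.filter p) := by
  rw [← card_toLeft_add_card_toRight]
  congr 2 <;> ext <;> simp

lemma Finset.exists_subset_erase_card_eq {α : Type*} [DecidableEq α] {s : Finset α} {k : ℕ}
    (hs : #s = k + 1) (hk : 1 ≤ k) (a x : α) :
    ∃ t ⊆ s.erase a, #t = k ∧ (x ∈ s.erase a → x ∈ t) := by
  obtain ⟨t, hxt, hts, htk⟩ := exists_subsuperset_card_eq (n := k)
    (inter_subset_left (s₁ := s.erase a) (s₂ := {x}))
    ((card_le_card inter_subset_right).trans (by simpa using hk))
    (by have := pred_card_le_card_erase (s := s) (a := a); omega)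
  exact ⟨t, hts, htk, fun hx => hxt (by simpa using hx)⟩

lemma Finset.le_sum_card_filter_ne {α β : Type*} [DecidableEq β] (s : Finset β) (D : Finset α)
    (r : α → β) : (#s - 1) * #D ≤ ∑ b ∈ s, #(D.filter fun v => r v ≠ b) := by
  calc (#s - 1) * #D = ∑ _v ∈ D, (#s - 1) := by simp [mul_comm]
    _ ≤ ∑ v ∈ D, #(s.filter fun b => r v ≠ b) :=
        sum_le_sum fun v _ => by simpa [filter_ne] using pred_card_le_card_erase
    _ = ∑ b ∈ s, #(D.filter fun v => r v ≠ b) := by simp only [card_filter]; exact sum_comm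

section Flexibility

variable {G : SimpleGraph V} {k : ℕ} {ε : ℚ}

lemma FlexSat.exists_coloring (hG : FlexSat G k ε) (hk : 1 ≤ k) {L : V → Finset ℕ}
    (hL : ∀ v, #(L v) = k) (D : Finset V) {r : V → ℕ} (hr : ∀ v ∈ D, r v ∈ L v) :
    ∃ c : V → ℕ, (∀ v, c v ∈ L v) ∧ (∀ u v, G.Adj u v → c u ≠ c v) ∧
      ε * #D ≤ #(D.filter fun v => c v = r v) := by
  rcases D.eq_empty_or_nonempty with rfl | hD
  -- `FlexSat` only speaks about nonempty domains: get a colouring from a one-vertex request.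
  · rcases isEmpty_or_nonempty V with hV | ⟨⟨v₀⟩⟩
    · exact ⟨fun _ => 0, isEmptyElim, isEmptyElim, by simp⟩
    · choose r₀ hr₀ using fun v => card_pos.mp (show 0 < #(L v) by rw [hL v]; omega)
      obtain ⟨c, hcL, hc, -⟩ := hG L hL {v₀} (singleton_nonempty _) r₀ fun v _ => hr₀ v
      exact ⟨c, hcL, hc, by simp⟩
  · exact hG L hL D hD r hr

lemma FlexSat.exists_cone_coloring (hG : FlexSat G k ε) (hk : 1 ≤ k)
    {L : Fin 1 ⊕ V → Finset ℕ} (hL : ∀ x, #(L x) = k + 1) (D : Finset V) {r : V → ℕ}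
    (hr : ∀ v ∈ D, r v ∈ L (.inr v)) {α : ℕ} (hα : α ∈ L (.inl 0)) :
    ∃ c : Fin 1 ⊕ V → ℕ, (∀ x, c x ∈ L x) ∧
      (∀ x y, (joinG (⊤ : SimpleGraph (Fin 1)) G).Adj x y → c x ≠ c y) ∧ c (.inl 0) = α ∧
      ε * #(D.filter fun v => r v ≠ α) ≤ #(D.filter fun v => c (.inr v) = r v) := by
  choose M hM hMk hrM using fun v => exists_subset_erase_card_eq (hL (.inr v)) hk α (r v)
  obtain ⟨cG, hcM, hcG, hsat⟩ := hG.exists_coloring hk hMk (D.filter fun v => r v ≠ α)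
    fun v hv => hrM v (mem_erase.2 ⟨(mem_filter.1 hv).2, hr v (mem_filter.1 hv).1⟩)
  have hcG_ne : ∀ v, cG v ≠ α ∧ cG v ∈ L (.inr v) := fun v => mem_erase.1 (hM v (hcM v))
  refine ⟨Sum.elim (fun _ => α) cG, ?_, ?_, rfl, hsat.trans ?_⟩
  · rintro (i | v)
    · rwa [Subsingleton.elim i 0]
    · exact (hcG_ne v).2
  · rintro (i | u) (j | v) h
    · exact absurd (Subsingleton.elim i j) (show (⊤ : SimpleGraph (Fin 1)).Adj i j from h).ne
    · exact (hcG_ne v).1.symm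
    · exact (hcG_ne u).1
    · exact hcG u v h
  · exact_mod_cast card_le_card (filter_subset_filter _ (filter_subset _ _))

end Flexibility

lemma exists_apex_color {a b : ℚ} (ha : 0 < a) (hb : 0 < b) {k : ℕ} (hk : b ≤ a * k)
    {s : Finset ℕ} (hs : #s = k + 1) (x : ℕ) {ρ : ℕ} (hρ : 0 < x → ρ ∈ s) (D : Finset V)
    (r : V → ℕ) :
    ∃ α ∈ s, a / (a + b) * (x + #D) ≤
      (if α = ρ then x else 0 : ℚ) + a / b * #(D.filter fun v => r v ≠ α) := by
  rcases lt_or_ge (a * #D) (b * x) with hsmall | hlarge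
  · have hx : 0 < x := by
      exact_mod_cast pos_of_mul_pos_right (hsmall.trans_le' (by positivity)) hb.le
    refine ⟨ρ, hρ hx, ?_⟩
    have hρ_only : a / (a + b) * (x + #D) ≤ x := by
      rw [div_mul_eq_mul_div, div_le_iff₀ (by positivity)]
      linarith
    rw [if_pos rfl]
    linarith [show 0 ≤ a / b * #(D.filter fun v => r v ≠ ρ) by positivity]
  · refine exists_le_of_sum_le (card_pos.1 (by omega)) ?_
    have hρ_sum : ∑ α ∈ s, (if α = ρ then x else 0 : ℚ) = x := by
      rw [sum_ite_eq']
      split_ifs with h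
      · rfl
      · simp [Nat.eq_zero_of_not_pos (mt hρ h)]
    have hne_sum : (k : ℚ) * #D ≤ ∑ α ∈ s, (#(D.filter fun v => r v ≠ α) : ℚ) := by
      exact_mod_cast (hs ▸ le_sum_card_filter_ne s D r : k * #D ≤ _)
    rw [sum_const, hs, sum_add_distrib, hρ_sum, ← mul_sum, nsmul_eq_mul]
    have hgap : x + a / b * (k * #D) - (k + 1 : ℕ) * (a / (a + b) * (x + #D)) =
        (a * k - b) * (a * #D - b * x) / (b * (a + b)) := by
      field_simp
      push_cast
      ring
    have hgap_nonneg : 0 ≤ (a * k - b) * (a * #D - b * x) / (b * (a + b)) :=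
      div_nonneg (mul_nonneg (by linarith) (by linarith)) (by positivity)
    linarith [mul_le_mul_of_nonneg_left hne_sum (show 0 ≤ a / b by positivity)]

/-- ε_ℓ(G,k) ≥ a/b (with k ≥ b/a) implies ε_ℓ(K_1 ∨ G, k+1) ≥ a/(a+b). -/
theorem stmt_19 {V : Type*} [Fintype V] (G : SimpleGraph V) (a b k : ℕ)
    (ha : 1 ≤ a) (hb : 1 ≤ b) (hk : (b : ℚ) / (a : ℚ) ≤ (k : ℚ))
    (hG : FlexSat G k ((a : ℚ) / (b : ℚ))) :
    FlexSat (joinG (⊤ : SimpleGraph (Fin 1)) G) (k + 1)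
      ((a : ℚ) / ((a : ℚ) + (b : ℚ))) := by
  intro L hL D _ r hr
  have ha' : (0 : ℚ) < a := by exact_mod_cast ha
  have hbk : (b : ℚ) ≤ a * k := by rwa [div_le_iff₀' ha'] at hk
  have hk1 : 1 ≤ k := Nat.pos_of_ne_zero fun hk0 => by
    have : b ≤ a * k := by exact_mod_cast hbk
    simp [hk0] at this
    omega
  have hr_apex : 0 < #D.toLeft → r (.inl 0) ∈ L (.inl 0) := fun h => by
    obtain ⟨i, hi⟩ := card_pos.1 h
    exact hr _ (mem_toLeft.1 (Subsingleton.elim i 0 ▸ hi))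
  obtain ⟨α, hα, hα_good⟩ := exists_apex_color ha' (by positivity) hbk (hL (.inl 0))
    #D.toLeft hr_apex D.toRight (fun v => r (.inr v))
  obtain ⟨c, hcL, hc, hcα, hsat⟩ := hG.exists_cone_coloring hk1 hL D.toRight
    (fun v hv => hr _ (mem_toRight.1 hv)) hα
  refine ⟨c, hcL, hc, ?_⟩
  rw [← card_filter_toLeft_add_card_filter_toRight, ← card_toLeft_add_card_toRight]
  push_cast
  refine hα_good.trans (add_le_add ?_ hsat)
  split_ifs with h
  · exact_mod_cast card_le_card fun i hi =>
      mem_filter.2 ⟨hi, by rw [Subsingleton.elim i 0, hcα, h]⟩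
  · positivity
end
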